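/- Let (f,g) ∈ C_3(I) and let μ be a Borel probability measure on [0,1]. Then for every fixed x ∈ I, the function m_x := m_{x;f,g;μ} is three times continuously differentiable in a neighborhood of 0 and its third derivative at 0 satisfies m_x'''(0) = μ₃·(Φ'_{f,g} + Φ²_{f,g} + Ψ_{f,g})(x). -/

import Mathlib

open MeasureTheory Set

/-- The generalized quasiarithmetic mean `M_{f,g;μ}` on the interval `I`. -/
noncomputable def Mmean (I : Set ℝ) (f g : ℝ → ℝ) (μ : Measure ℝ) (x y : ℝ) : ℝ :=
  Function.invFunOn (fun t => f t / g t) I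
    ((∫ t in Set.Icc (0:ℝ) 1, f (t * x + (1 - t) * y) ∂μ) /
      (∫ t in Set.Icc (0:ℝ) 1, g (t * x + (1 - t) * y) ∂μ))

/-- First moment `μ̂₁` of a measure on `[0,1]`. -/
noncomputable def mom1 (μ : Measure ℝ) : ℝ := ∫ t in Set.Icc (0:ℝ) 1, t ∂μ

/-- `n`-th centralized moment `μ_n` of a measure on `[0,1]`. -/
noncomputable def cmom (μ : Measure ℝ) (n : ℕ) : ℝ :=
  ∫ t in Set.Icc (0:ℝ) 1, (t - mom1 μ) ^ n ∂μ

/-- The auxiliary function `m_{x;f,g;μ}`. -/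
noncomputable def mfun (I : Set ℝ) (f g : ℝ → ℝ) (μ : Measure ℝ) (x : ℝ) : ℝ → ℝ :=
  fun u => Mmean I f g μ (x + (1 - mom1 μ) * u) (x - mom1 μ * u)

/-- The `(i,j)`-order Wronskian `W^{i,j}_{f,g} = f⁽ⁱ⁾g⁽ʲ⁾ − f⁽ʲ⁾g⁽ⁱ⁾`. -/
noncomputable def Wr (i j : ℕ) (f g : ℝ → ℝ) : ℝ → ℝ :=
  fun x => iteratedDeriv i f x * iteratedDeriv j g x - iteratedDeriv j f x * iteratedDeriv i g x

/-- `Φ_{f,g} = W^{2,0}/W^{1,0}`. -/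
noncomputable def Phi (f g : ℝ → ℝ) : ℝ → ℝ := fun x => Wr 2 0 f g x / Wr 1 0 f g x

/-- `Ψ_{f,g} = −W^{2,1}/W^{1,0}`. -/
noncomputable def Psi (f g : ℝ → ℝ) : ℝ → ℝ := fun x => -(Wr 2 1 f g x / Wr 1 0 f g x)

/-- The class `𝒞_n(I)` for `n ≥ 1`. -/
def ClassC (n : ℕ) (I : Set ℝ) (f g : ℝ → ℝ) : Prop :=
  ContDiffOn ℝ n f I ∧ ContDiffOn ℝ n g I ∧ (∀ x ∈ I, 0 < g x) ∧
    ∀ x ∈ I, Wr 1 0 f g x ≠ 0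

/-- The class `𝒞₀(I)`. -/
def ClassC0 (I : Set ℝ) (f g : ℝ → ℝ) : Prop :=
  ContinuousOn f I ∧ ContinuousOn g I ∧ (∀ x ∈ I, 0 < g x) ∧
    (StrictMonoOn (fun x => f x / g x) I ∨ StrictAntiOn (fun x => f x / g x) I)

/-- Equivalence of pairs: `(f,g) ∼ (F,G)`. -/
def EquivPair (I : Set ℝ) (f g F G : ℝ → ℝ) : Prop :=
  ∃ a b c d : ℝ, a * d ≠ b * c ∧
    ∀ x ∈ I, F x = a * f x + b * g x ∧ G x = c * f x + d * g x

/-- Equality of two two-variable means near the diagonal of `I²`. -/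
def EqualNearDiag (I : Set ℝ) (M N : ℝ → ℝ → ℝ) : Prop :=
  ∃ U : Set (ℝ × ℝ), IsOpen U ∧ U ⊆ I ×ˢ I ∧
    I ⊆ closure {y | y ∈ I ∧ (y, y) ∈ U} ∧
    ∀ p ∈ U, M p.1 p.2 = N p.1 p.2

/-- The quasiarithmetic mean `A_φ`. -/
noncomputable def QAmean (I : Set ℝ) (φ : ℝ → ℝ) (x y : ℝ) : ℝ :=
  Function.invFunOn φ I ((φ x + φ y) / 2)

/-- The sine-type function `S_t`. -/
noncomputable def Sfun (t x : ℝ) : ℝ :=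
  if t < 0 then Real.sin (Real.sqrt (-t) * x)
  else if t = 0 then x
  else Real.sinh (Real.sqrt t * x)

/-- The cosine-type function `C_t`. -/
noncomputable def Cfun (t x : ℝ) : ℝ :=
  if t < 0 then Real.cos (Real.sqrt (-t) * x)
  else if t = 0 then 1
  else Real.cosh (Real.sqrt t * x)

/-- The real (sign-preserving) cube root. -/
noncomputable def cbrt (x : ℝ) : ℝ :=
  if x < 0 then -((-x) ^ ((1:ℝ)/3)) else x ^ ((1:ℝ)/3)

/-!
Put `c = μ̂₁`. Since `t(x + (1 - c)u) + (1 - t)(x - cu) = x + (t - c)u`, we have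
`m_x = (f/g)⁻¹ ∘ (P/Q)` with `P u = ∫ f(x + (t - c)u) dμ(t)` and `Q` likewise. Differentiating
under the integral sign gives `P⁽ʲ⁾(0) = f⁽ʲ⁾(x) μ_j`, so `P'(0) = Q'(0) = 0` because `μ₁ = 0`.
Hence `r = P/Q` is critical at `0`, the order-three chain rule collapses to
`m_x'''(0) = r'''(0) / (f/g)'(x)`, and `r'''(0) = μ₃ (f'''g - fg''')(x) / g(x)²`. As
`(f/g)' = W^{1,0}/g²`, this is `μ₃ W^{3,0}/W^{1,0}`, which equals `μ₃ (Φ' + Φ² + Ψ)` because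
`(W^{2,0})' = W^{3,0} + W^{2,1}` and `(W^{1,0})' = W^{2,0}`.
-/

open Filter Metric Topology Function

lemma Set.OrdConnected.injOn_of_hasDerivAt_ne_zero {I : Set ℝ} (hI : I.OrdConnected)
    {h h' : ℝ → ℝ} (hh : ∀ y ∈ I, HasDerivAt h (h' y) y) (hh' : ∀ y ∈ I, h' y ≠ 0) :
    InjOn h I := by
  have hne : ∀ a ∈ I, ∀ b ∈ I, a < b → h a ≠ h b := by
    intro a ha b hb hab heq
    have hsub : Icc a b ⊆ I := hI.out ha hb
    obtain ⟨c, hc, hc0⟩ := exists_hasDerivAt_eq_zero hab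
      (fun y hy => (hh y (hsub hy)).continuousAt.continuousWithinAt) heq
      (fun y hy => hh y (hsub (Ioo_subset_Icc_self hy)))
    exact hh' c (hsub (Ioo_subset_Icc_self hc)) hc0
  intro a ha b hb heq
  by_contra hab
  rcases lt_or_gt_of_ne hab with hab | hba
  · exact hne a ha b hb hab heq
  · exact hne b hb a ha hba heq.symm

section InverseFunction

variable {h : ℝ → ℝ} {I : Set ℝ} {x : ℝ}

lemma HasStrictDerivAt.hasDerivAt_invFunOn {h' : ℝ} (hh : HasStrictDerivAt h h' x)
    (hh' : h' ≠ 0) (hI : I ∈ 𝓝 x) (hinj : InjOn h I) :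
    HasDerivAt (invFunOn h I) h'⁻¹ (h x) :=
  (hh.to_local_left_inverse hh' (eventually_of_mem hI fun _ hy => hinj.leftInvOn_invFunOn hy))
    |>.hasDerivAt

lemma ContDiffAt.contDiffAt_invFunOn {n : WithTop ℕ∞} (hh : ContDiffAt ℝ n h x) (hn : n ≠ 0)
    (hx : deriv h x ≠ 0) (hI : I ∈ 𝓝 x) (hinj : InjOn h I) :
    ContDiffAt ℝ n (invFunOn h I) (h x) := by
  have hf' := (hh.hasStrictDerivAt hn).hasDerivAt.hasFDerivAt_equiv hx
  set ψ := hh.localInverse hf' hn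
  have hψ : ContDiffAt ℝ n ψ (h x) := hh.to_localInverse hf' hn
  have hright : ∀ᶠ y in 𝓝 (h x), h (ψ y) = y :=
    (hh.hasStrictFDerivAt' hf' hn).eventually_right_inverse
  have hψI : ∀ᶠ y in 𝓝 (h x), ψ y ∈ I := hψ.continuousAt.preimage_mem_nhds
    (by rwa [show ψ (h x) = x from hh.localInverse_apply_image hf' hn])
  refine hψ.congr_of_eventuallyEq ?_
  filter_upwards [hright, hψI] with y hy hyI
  conv_lhs => rw [← hy]
  exact hinj.leftInvOn_invFunOn hyI

end InverseFunction

section IteratedDeriv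

variable {𝕜 : Type*} [NontriviallyNormedField 𝕜] {a : 𝕜}

lemma iteratedDeriv_three_comp_of_deriv_eq_zero {φ r : 𝕜 → 𝕜} (hφ : ContDiffAt 𝕜 3 φ (r a))
    (hr : ContDiffAt 𝕜 3 r a) (hr' : deriv r a = 0) :
    iteratedDeriv 3 (φ ∘ r) a = deriv φ (r a) * iteratedDeriv 3 r a := by
  simp [iteratedDeriv_scomp_three hφ hr, hr', mul_comm]

lemma deriv_div_eq_zero_of_deriv_eq_zero {p q : 𝕜 → 𝕜} (hp : DifferentiableAt 𝕜 p a)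
    (hq : DifferentiableAt 𝕜 q a) (hqa : q a ≠ 0) (hp' : deriv p a = 0) (hq' : deriv q a = 0) :
    deriv (fun u => p u / q u) a = 0 := by
  simp [deriv_fun_div hp hq hqa, hp', hq']

lemma iteratedDeriv_three_div_of_deriv_eq_zero {p q : 𝕜 → 𝕜} (hp : ContDiffAt 𝕜 3 p a)
    (hq : ContDiffAt 𝕜 3 q a) (hqa : q a ≠ 0) (hp' : deriv p a = 0) (hq' : deriv q a = 0) :
    iteratedDeriv 3 (fun u => p u / q u) a
      = (iteratedDeriv 3 p a - p a / q a * iteratedDeriv 3 q a) / q a := by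
  have hr : ContDiffAt 𝕜 3 (fun u => p u / q u) a := hp.div hq hqa
  have hr' : deriv (fun u => p u / q u) a = 0 :=
    deriv_div_eq_zero_of_deriv_eq_zero (hp.differentiableAt (by norm_num))
      (hq.differentiableAt (by norm_num)) hqa hp' hq'
  have hpq : p =ᶠ[𝓝 a] (fun u => p u / q u) * q := by
    filter_upwards [hq.continuousAt.eventually_ne hqa] with u hu
    simp [div_mul_cancel₀ _ hu]
  have hleibniz := iteratedDeriv_mul hr hq
  rw [← hpq.iteratedDeriv_eq] at hleibniz
  simp [Finset.sum_range_succ, hr', hq'] at hleibniz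
  rw [eq_div_iff hqa]
  linear_combination -hleibniz

variable {E : Type*} [NormedAddCommGroup E] [NormedSpace 𝕜 E] {f : 𝕜 → E}

lemma ContDiffAt.contDiffAt_iteratedDeriv {m i : ℕ} (hf : ContDiffAt 𝕜 (m + i : ℕ) f a) :
    ContDiffAt 𝕜 m (iteratedDeriv i f) a := by
  induction i generalizing m with
  | zero => simpa using hf
  | succ i ih =>
    rw [iteratedDeriv_succ]
    exact (ih (m := m + 1) (by rwa [show m + 1 + i = m + (i + 1) by omega])).derivWithin
      (by norm_cast)

lemma ContDiffAt.hasDerivAt_iteratedDeriv {n i : ℕ} (hf : ContDiffAt 𝕜 n f a) (hi : i < n) :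
    HasDerivAt (iteratedDeriv i f) (iteratedDeriv (i + 1) f a) a := by
  have h1 : ContDiffAt 𝕜 (1 : ℕ) (iteratedDeriv i f) a :=
    (hf.of_le (by exact_mod_cast (by omega : 1 + i ≤ n))).contDiffAt_iteratedDeriv
  rw [iteratedDeriv_succ]
  exact (h1.differentiableAt (by norm_num)).hasDerivAt

end IteratedDeriv

section Wronskian

variable {f g : ℝ → ℝ} {x : ℝ}

lemma hasDerivAt_Wr {n i j : ℕ} (hf : ContDiffAt ℝ n f x) (hg : ContDiffAt ℝ n g x)
    (hi : i < n) (hj : j < n) :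
    HasDerivAt (Wr i j f g) (Wr (i + 1) j f g x + Wr i (j + 1) f g x) x := by
  refine (((hf.hasDerivAt_iteratedDeriv hi).fun_mul (hg.hasDerivAt_iteratedDeriv hj)).fun_sub
    ((hf.hasDerivAt_iteratedDeriv hj).fun_mul (hg.hasDerivAt_iteratedDeriv hi))).congr_deriv ?_
  simp only [Wr]
  ring

lemma hasDerivAt_div_Wr (hf : DifferentiableAt ℝ f x) (hg : DifferentiableAt ℝ g x)
    (hgx : g x ≠ 0) : HasDerivAt (fun y => f y / g y) (Wr 1 0 f g x / g x ^ 2) x := by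
  simpa [Wr] using hf.hasDerivAt.fun_div hg.hasDerivAt hgx

lemma deriv_Phi_add_Phi_sq_add_Psi (hf : ContDiffAt ℝ 3 f x) (hg : ContDiffAt ℝ 3 g x)
    (hW : Wr 1 0 f g x ≠ 0) :
    deriv (Phi f g) x + Phi f g x ^ 2 + Psi f g x = Wr 3 0 f g x / Wr 1 0 f g x := by
  have h20 := hasDerivAt_Wr (i := 2) (j := 0) hf hg (by norm_num) (by norm_num)
  have h10 := hasDerivAt_Wr (i := 1) (j := 0) hf hg (by norm_num) (by norm_num)
  have h11 : Wr 1 1 f g x = 0 := sub_self _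
  norm_num only [h11] at h20 h10
  rw [show Phi f g = fun y => Wr 2 0 f g y / Wr 1 0 f g y from rfl, (h20.fun_div h10 hW).deriv]
  simp only [Psi]
  field_simp
  ring

end Wronskian

/-- The weight `(t - c) ^ k` is there because each derivative in `u` brings down a factor
`t - c`. -/
noncomputable def momentIntegral (μ : Measure ℝ) (c : ℝ) (F : ℝ → ℝ) (x : ℝ) (k : ℕ) (u : ℝ) :
    ℝ :=
  ∫ t in Icc (0:ℝ) 1, F (x + (t - c) * u) * (t - c) ^ k ∂μ

section MomentIntegral

variable {μ : Measure ℝ} {c x δ : ℝ} {F : ℝ → ℝ}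

lemma dist_add_sub_mul_le {t u : ℝ} (hc : c ∈ Icc (0:ℝ) 1) (ht : t ∈ Icc (0:ℝ) 1) :
    dist (x + (t - c) * u) x ≤ |u| := by
  rw [Real.dist_eq, add_sub_cancel_left, abs_mul]
  exact mul_le_of_le_one_left (abs_nonneg u) (abs_sub_le_of_nonneg_of_le ht.1 ht.2 hc.1 hc.2)

lemma add_sub_mul_mem_closedBall {t u : ℝ} (hc : c ∈ Icc (0:ℝ) 1) (ht : t ∈ Icc (0:ℝ) 1)
    (hu : u ∈ closedBall 0 δ) : x + (t - c) * u ∈ closedBall x δ :=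
  (dist_add_sub_mul_le hc ht).trans (by simpa using hu)

lemma aestronglyMeasurable_momentIntegrand (hc : c ∈ Icc (0:ℝ) 1)
    (hF : ContinuousOn F (closedBall x δ)) (k : ℕ) {u : ℝ} (hu : u ∈ closedBall 0 δ) :
    AEStronglyMeasurable (fun t => F (x + (t - c) * u) * (t - c) ^ k) (μ.restrict (Icc 0 1)) :=
  ((hF.comp (by fun_prop) fun _ ht => add_sub_mul_mem_closedBall hc ht hu).mul
    (by fun_prop)).aestronglyMeasurable measurableSet_Icc

lemma exists_bound_momentIntegrand (hc : c ∈ Icc (0:ℝ) 1)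
    (hF : ContinuousOn F (closedBall x δ)) (k : ℕ) :
    ∃ C, ∀ u ∈ closedBall (0:ℝ) δ, ∀ t ∈ Icc (0:ℝ) 1,
      ‖F (x + (t - c) * u) * (t - c) ^ k‖ ≤ C := by
  obtain ⟨C, hC⟩ := (isCompact_closedBall x δ).exists_bound_of_continuousOn hF
  refine ⟨C, fun u hu t ht => ?_⟩
  have hpow : ‖(t - c) ^ k‖ ≤ 1 := by
    rw [norm_pow, Real.norm_eq_abs]
    exact pow_le_one₀ (abs_nonneg _) (abs_sub_le_of_nonneg_of_le ht.1 ht.2 hc.1 hc.2)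
  rw [norm_mul]
  exact (mul_le_of_le_one_right (norm_nonneg _) hpow).trans
    (hC _ (add_sub_mul_mem_closedBall hc ht hu))

lemma hasDerivAt_momentIntegral [IsFiniteMeasure μ] (hc : c ∈ Icc (0:ℝ) 1)
    (hF : ∀ y ∈ closedBall x δ, ContDiffAt ℝ 1 F y) (k : ℕ) {u : ℝ} (hu : u ∈ ball (0:ℝ) δ) :
    HasDerivAt (momentIntegral μ c F x k) (momentIntegral μ c (deriv F) x (k + 1) u) u := by
  have hFc : ContinuousOn F (closedBall x δ) :=
    fun y hy => (hF y hy).continuousAt.continuousWithinAt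
  have hF'c : ContinuousOn (deriv F) (closedBall x δ) :=
    fun y hy => ((hF y hy).derivWithin (m := 0) le_rfl).continuousAt.continuousWithinAt
  have hu' : u ∈ closedBall (0:ℝ) δ := ball_subset_closedBall hu
  have hnhds : closedBall (0:ℝ) δ ∈ 𝓝 u :=
    mem_of_superset (isOpen_ball.mem_nhds hu) ball_subset_closedBall
  obtain ⟨C₀, hC₀⟩ := exists_bound_momentIntegrand hc hFc k
  obtain ⟨C₁, hC₁⟩ := exists_bound_momentIntegrand hc hF'c (k + 1)
  refine (hasDerivAt_integral_of_dominated_loc_of_deriv_le (bound := fun _ => C₁)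
    (F' := fun v t => deriv F (x + (t - c) * v) * (t - c) ^ (k + 1)) hnhds
    (eventually_of_mem hnhds fun v hv => aestronglyMeasurable_momentIntegrand hc hFc k hv) ?_
    (aestronglyMeasurable_momentIntegrand hc hF'c (k + 1) hu') ?_ (integrable_const C₁) ?_).2
  · refine Integrable.mono' (integrable_const C₀)
      (aestronglyMeasurable_momentIntegrand hc hFc k hu') ?_
    filter_upwards [ae_restrict_mem measurableSet_Icc] with t ht using hC₀ u hu' t ht
  · filter_upwards [ae_restrict_mem measurableSet_Icc] with t ht v hv using hC₁ v hv t ht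
  · filter_upwards [ae_restrict_mem measurableSet_Icc] with t ht v hv
    have hline : HasDerivAt (fun v : ℝ => x + (t - c) * v) (t - c) v := by
      simpa using ((hasDerivAt_id v).const_mul (t - c)).const_add x
    have hFv := (hF _ (add_sub_mul_mem_closedBall hc ht hv)).differentiableAt one_ne_zero
    exact ((hFv.hasDerivAt.comp v hline).mul_const ((t - c) ^ k)).congr_deriv (by ring)

lemma continuousAt_momentIntegral [IsFiniteMeasure μ] (hc : c ∈ Icc (0:ℝ) 1)
    (hF : ContinuousOn F (closedBall x δ)) (k : ℕ) {u : ℝ} (hu : u ∈ ball (0:ℝ) δ) :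
    ContinuousAt (momentIntegral μ c F x k) u := by
  have hnhds : closedBall (0:ℝ) δ ∈ 𝓝 u :=
    mem_of_superset (isOpen_ball.mem_nhds hu) ball_subset_closedBall
  obtain ⟨C, hC⟩ := exists_bound_momentIntegrand hc hF k
  refine continuousAt_of_dominated (bound := fun _ => C)
    (eventually_of_mem hnhds fun v hv => aestronglyMeasurable_momentIntegrand hc hF k hv)
    (eventually_of_mem hnhds fun v hv => ?_) (integrable_const C) ?_
  · filter_upwards [ae_restrict_mem measurableSet_Icc] with t ht using hC v hv t ht
  · filter_upwards [ae_restrict_mem measurableSet_Icc] with t ht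
    have hmem : closedBall x δ ∈ 𝓝 (x + (t - c) * u) :=
      mem_of_superset (isOpen_ball.mem_nhds ((dist_add_sub_mul_le hc ht).trans_lt
        (by simpa using hu))) ball_subset_closedBall
    exact ((hF.continuousAt hmem).comp (f := fun v : ℝ => x + (t - c) * v)
      (by fun_prop)).mul continuousAt_const

lemma deriv_momentIntegral_eqOn [IsFiniteMeasure μ] (hc : c ∈ Icc (0:ℝ) 1)
    (hF : ∀ y ∈ closedBall x δ, ContDiffAt ℝ 1 F y) (k : ℕ) :
    EqOn (deriv (momentIntegral μ c F x k)) (momentIntegral μ c (deriv F) x (k + 1))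
      (ball 0 δ) :=
  fun _ hu => (hasDerivAt_momentIntegral hc hF k hu).deriv

lemma contDiffOn_momentIntegral [IsFiniteMeasure μ] (hc : c ∈ Icc (0:ℝ) 1) {n : ℕ}
    (hF : ∀ y ∈ closedBall x δ, ContDiffAt ℝ n F y) (k : ℕ) :
    ContDiffOn ℝ n (momentIntegral μ c F x k) (ball 0 δ) := by
  induction n generalizing F k with
  | zero =>
    rw [CharP.cast_eq_zero, contDiffOn_zero]
    exact fun u hu => (continuousAt_momentIntegral hc
      (fun y hy => (hF y hy).continuousAt.continuousWithinAt) k hu).continuousWithinAt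
  | succ n ih =>
    have hF1 : ∀ y ∈ closedBall x δ, ContDiffAt ℝ 1 F y :=
      fun y hy => (hF y hy).of_le (by exact_mod_cast Nat.le_add_left 1 n)
    rw [Nat.cast_succ, contDiffOn_succ_iff_deriv_of_isOpen isOpen_ball]
    refine ⟨fun u hu => (hasDerivAt_momentIntegral hc hF1 k hu).differentiableAt
      |>.differentiableWithinAt, by simp, ?_⟩
    exact (ih (fun y hy => (hF y hy).derivWithin le_rfl) (k + 1)).congr
      (deriv_momentIntegral_eqOn hc hF1 k)

lemma iteratedDeriv_momentIntegral_eqOn [IsFiniteMeasure μ] (hc : c ∈ Icc (0:ℝ) 1) {n : ℕ}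
    (hF : ∀ y ∈ closedBall x δ, ContDiffAt ℝ n F y) (k : ℕ) :
    EqOn (iteratedDeriv n (momentIntegral μ c F x k))
      (momentIntegral μ c (iteratedDeriv n F) x (k + n)) (ball 0 δ) := by
  induction n generalizing F k with
  | zero => intro u _; simp
  | succ n ih =>
    intro u hu
    have hF1 : ∀ y ∈ closedBall x δ, ContDiffAt ℝ 1 F y :=
      fun y hy => (hF y hy).of_le (by exact_mod_cast Nat.le_add_left 1 n)
    have hderiv : deriv (momentIntegral μ c F x k) =ᶠ[𝓝 u]
        momentIntegral μ c (deriv F) x (k + 1) :=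
      (deriv_momentIntegral_eqOn hc hF1 k).eventuallyEq_of_mem (isOpen_ball.mem_nhds hu)
    rw [iteratedDeriv_succ', hderiv.iteratedDeriv_eq, iteratedDeriv_succ',
      ih (fun y hy => (hF y hy).derivWithin le_rfl) (k + 1) hu, add_right_comm, add_assoc]

lemma momentIntegral_apply_zero (μ : Measure ℝ) (c : ℝ) (F : ℝ → ℝ) (x : ℝ) (k : ℕ) :
    momentIntegral μ c F x k 0 = F x * ∫ t in Icc (0:ℝ) 1, (t - c) ^ k ∂μ := by
  simp [momentIntegral, integral_const_mul]

end MomentIntegral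

lemma mom1_mem_Icc (μ : Measure ℝ) [IsProbabilityMeasure μ] : mom1 μ ∈ Icc (0:ℝ) 1 := by
  refine ⟨setIntegral_nonneg measurableSet_Icc fun t ht => ht.1, ?_⟩
  calc mom1 μ ≤ ∫ _ in Icc (0:ℝ) 1, (1:ℝ) ∂μ :=
        setIntegral_mono_on continuous_id.integrableOn_Icc (integrable_const 1)
          measurableSet_Icc fun t ht => ht.2
    _ ≤ 1 := by simp

lemma cmom_zero {μ : Measure ℝ} (hμ : μ (Icc (0:ℝ) 1) = 1) : cmom μ 0 = 1 := by
  simp [cmom, measureReal_def, hμ]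

lemma cmom_one {μ : Measure ℝ} [IsFiniteMeasure μ] (hμ : μ (Icc (0:ℝ) 1) = 1) :
    cmom μ 1 = 0 := by
  simp only [cmom, pow_one]
  rw [integral_sub (continuous_id.integrableOn_Icc (f := fun t : ℝ => t)) (integrable_const _)]
  simp [mom1, measureReal_def, hμ]

lemma momentIntegral_mom1_jet {μ : Measure ℝ} [IsProbabilityMeasure μ]
    (hμ : μ (Icc (0:ℝ) 1) = 1) {F : ℝ → ℝ} {x δ : ℝ} (hδ : 0 < δ)
    (hF : ∀ y ∈ closedBall x δ, ContDiffAt ℝ 3 F y) :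
    ContDiffAt ℝ 3 (momentIntegral μ (mom1 μ) F x 0) 0 ∧
      momentIntegral μ (mom1 μ) F x 0 0 = F x ∧
      deriv (momentIntegral μ (mom1 μ) F x 0) 0 = 0 ∧
      iteratedDeriv 3 (momentIntegral μ (mom1 μ) F x 0) 0 = iteratedDeriv 3 F x * cmom μ 3 := by
  have hc := mom1_mem_Icc μ
  have h0 : (0:ℝ) ∈ ball (0:ℝ) δ := mem_ball_self hδ
  have hval : ∀ G k, momentIntegral μ (mom1 μ) G x k 0 = G x * cmom μ k :=
    fun G k => momentIntegral_apply_zero μ (mom1 μ) G x k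
  have hF1 : ∀ y ∈ closedBall x δ, ContDiffAt ℝ (1 : ℕ) F y :=
    fun y hy => (hF y hy).of_le (by norm_num)
  refine ⟨(contDiffOn_momentIntegral hc hF 0).contDiffAt (isOpen_ball.mem_nhds h0), ?_, ?_, ?_⟩
  · rw [hval, cmom_zero hμ, mul_one]
  · rw [← iteratedDeriv_one, iteratedDeriv_momentIntegral_eqOn hc hF1 0 h0, hval, zero_add,
      cmom_one hμ, mul_zero]
  · rw [iteratedDeriv_momentIntegral_eqOn hc hF 0 h0, hval]

noncomputable def momentRatio (μ : Measure ℝ) (f g : ℝ → ℝ) (x u : ℝ) : ℝ :=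
  momentIntegral μ (mom1 μ) f x 0 u / momentIntegral μ (mom1 μ) g x 0 u

lemma mfun_eq_comp (I : Set ℝ) (f g : ℝ → ℝ) (μ : Measure ℝ) (x : ℝ) :
    mfun I f g μ x = invFunOn (fun y => f y / g y) I ∘ momentRatio μ f g x := by
  have hline : ∀ u t : ℝ, t * (x + (1 - mom1 μ) * u) + (1 - t) * (x - mom1 μ * u)
      = x + (t - mom1 μ) * u := fun u t => by ring
  funext u
  simp only [mfun, Mmean, momentRatio, momentIntegral, comp, pow_zero, mul_one, hline]

lemma momentRatio_jet {μ : Measure ℝ} [IsProbabilityMeasure μ] (hμ : μ (Icc (0:ℝ) 1) = 1)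
    {f g : ℝ → ℝ} {x δ : ℝ} (hδ : 0 < δ) (hf : ∀ y ∈ closedBall x δ, ContDiffAt ℝ 3 f y)
    (hg : ∀ y ∈ closedBall x δ, ContDiffAt ℝ 3 g y) (hgx : g x ≠ 0) :
    ContDiffAt ℝ 3 (momentRatio μ f g x) 0 ∧ momentRatio μ f g x 0 = f x / g x ∧
      deriv (momentRatio μ f g x) 0 = 0 ∧
      iteratedDeriv 3 (momentRatio μ f g x) 0 = cmom μ 3 * Wr 3 0 f g x / g x ^ 2 := by
  obtain ⟨hPC, hP0, hP1, hP3⟩ := momentIntegral_mom1_jet hμ hδ hf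
  obtain ⟨hQC, hQ0, hQ1, hQ3⟩ := momentIntegral_mom1_jet hμ hδ hg
  have hQ0ne : momentIntegral μ (mom1 μ) g x 0 0 ≠ 0 := hQ0 ▸ hgx
  refine ⟨hPC.div hQC hQ0ne, by rw [momentRatio, hP0, hQ0],
    deriv_div_eq_zero_of_deriv_eq_zero (hPC.differentiableAt (by norm_num))
      (hQC.differentiableAt (by norm_num)) hQ0ne hP1 hQ1, ?_⟩
  unfold momentRatio
  rw [iteratedDeriv_three_div_of_deriv_eq_zero hPC hQC hQ0ne hP1 hQ1, hP0, hQ0, hP3,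
    hQ3, Wr, iteratedDeriv_zero, iteratedDeriv_zero]
  field_simp

lemma ClassC.contDiffAt_and_hasDerivAt_invFunOn_div {I : Set ℝ} {f g : ℝ → ℝ}
    (hfg : ClassC 3 I f g) (hI : IsOpen I) (hIc : I.OrdConnected) {x : ℝ} (hx : x ∈ I) :
    ContDiffAt ℝ 3 (invFunOn (fun y => f y / g y) I) (f x / g x) ∧
      HasDerivAt (invFunOn (fun y => f y / g y) I) (Wr 1 0 f g x / g x ^ 2)⁻¹ (f x / g x) := by
  obtain ⟨hf, hg, hgpos, hW⟩ := hfg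
  have hfI : ∀ y ∈ I, ContDiffAt ℝ 3 f y := fun y hy => hf.contDiffAt (hI.mem_nhds hy)
  have hgI : ∀ y ∈ I, ContDiffAt ℝ 3 g y := fun y hy => hg.contDiffAt (hI.mem_nhds hy)
  have hd : ∀ y ∈ I, HasDerivAt (fun y => f y / g y) (Wr 1 0 f g y / g y ^ 2) y :=
    fun y hy => hasDerivAt_div_Wr ((hfI y hy).differentiableAt (by norm_num))
      ((hgI y hy).differentiableAt (by norm_num)) (hgpos y hy).ne'
  have hd0 : ∀ y ∈ I, Wr 1 0 f g y / g y ^ 2 ≠ 0 :=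
    fun y hy => div_ne_zero (hW y hy) (pow_ne_zero 2 (hgpos y hy).ne')
  have hinj := hIc.injOn_of_hasDerivAt_ne_zero hd hd0
  have hC : ContDiffAt ℝ 3 (fun y => f y / g y) x := (hfI x hx).div (hgI x hx) (hgpos x hx).ne'
  refine ⟨hC.contDiffAt_invFunOn (by norm_num) ((hd x hx).deriv ▸ hd0 x hx) (hI.mem_nhds hx)
    hinj, ?_⟩
  have hstrict := (hd x hx).deriv ▸ hC.hasStrictDerivAt (by norm_num)
  exact hstrict.hasDerivAt_invFunOn (hd0 x hx) (hI.mem_nhds hx) hinj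

theorem statement12_general (I : Set ℝ) (hIopen : IsOpen I)
    (hIconn : I.OrdConnected)
    (f g : ℝ → ℝ) (hfg : ClassC 3 I f g)
    (μ : Measure ℝ) [IsProbabilityMeasure μ] (hsupp : μ (Set.Icc (0:ℝ) 1)ᶜ = 0) :
    ∀ x ∈ I,
      ContDiffAt ℝ 3 (mfun I f g μ x) 0 ∧
      iteratedDeriv 3 (mfun I f g μ x) 0
        = cmom μ 3 * (deriv (Phi f g) x + Phi f g x ^ 2 + Psi f g x) := by
  intro x hx
  obtain ⟨hinvC, hinvD⟩ := hfg.contDiffAt_and_hasDerivAt_invFunOn_div hIopen hIconn hx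
  obtain ⟨hf, hg, hgpos, hW⟩ := hfg
  obtain ⟨δ, hδ, hδI⟩ := nhds_basis_closedBall.mem_iff.1 (hIopen.mem_nhds hx)
  obtain ⟨hrC, hr0, hr1, hr3⟩ := momentRatio_jet (μ := μ)
    ((prob_compl_eq_zero_iff measurableSet_Icc).1 hsupp) hδ
    (fun y hy => hf.contDiffAt (hIopen.mem_nhds (hδI hy)))
    (fun y hy => hg.contDiffAt (hIopen.mem_nhds (hδI hy))) (hgpos x hx).ne'
  rw [← hr0] at hinvC hinvD
  rw [mfun_eq_comp]
  refine ⟨hinvC.comp 0 hrC, ?_⟩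
  rw [iteratedDeriv_three_comp_of_deriv_eq_zero hinvC hrC hr1, hinvD.deriv, hr3,
    deriv_Phi_add_Phi_sq_add_Psi (hf.contDiffAt (hIopen.mem_nhds hx))
      (hg.contDiffAt (hIopen.mem_nhds hx)) (hW x hx)]
  field_simp [hW x hx, (hgpos x hx).ne']

/-- The third derivative of `m_x` at the origin. -/
theorem statement12 (I : Set ℝ) (hIopen : IsOpen I) (hIne : I.Nonempty)
    (hIconn : I.OrdConnected)
    (f g : ℝ → ℝ) (hfg : ClassC 3 I f g)
    (μ : Measure ℝ) [IsProbabilityMeasure μ] (hsupp : μ (Set.Icc (0:ℝ) 1)ᶜ = 0) :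
    ∀ x ∈ I,
      ContDiffAt ℝ 3 (mfun I f g μ x) 0 ∧
      iteratedDeriv 3 (mfun I f g μ x) 0
        = cmom μ 3 * (deriv (Phi f g) x + Phi f g x ^ 2 + Psi f g x) :=
  statement12_general I hIopen hIconn f g hfg μ hsupp
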